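/- arXiv:1309.1999 — 3 statements merged into one kernel-verified Lean document; each statement's English description precedes it below -/
import Mathlib

section
/- Let p ≥ 2 be an integer. Then in ℤ[t]: (t^p - 1)·(∑_{i=0}^{p-2}(t^{(2p-1)i} + t^{(2p-1)i + p}) - ∑_{i=0}^{2(p-2)} t^{ip+1}) = (t - 1)·∑_{i=0}^{p-1} t^{(2p-1)i}. -/
/-!
Write `p = n + 2` and `q = 2p - 1`. The positive part of the bracket is `(1 + x^p) S` with
`S = ∑_{i<p-1} x^{qi}`, and the negative part is `x T` with `T = ∑_{i<2p-3} x^{pi}`.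
Since `x^{2p} = x · x^q` and `x · x^{p(2p-3)} = x^{q(p-1)}`, multiplying by `x^p - 1` and using
the two geometric-series identities `(x^q - 1) S = x^{q(p-1)} - 1`, `(x^p - 1) T = x^{p(2p-3)} - 1`
leaves `(x - 1)(S + x^{q(p-1)})`.
-/

open Polynomial Finset

theorem pow_sub_one_mul_sum_range_pow_mul {R : Type*} [CommRing R] (x : R) (k n : ℕ) :
    (x ^ k - 1) * ∑ i ∈ range n, x ^ (k * i) = x ^ (k * n) - 1 := by
  simp_rw [pow_mul]
  rw [mul_comm, geom_sum_mul]

theorem pow_sub_one_mul_torus_alexander {R : Type*} [CommRing R] (x : R) (n : ℕ) :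
    (x ^ (n + 2) - 1) *
        (∑ i ∈ range (n + 1), (x ^ ((2 * n + 3) * i) + x ^ ((2 * n + 3) * i + (n + 2))) -
          ∑ i ∈ range (2 * n + 1), x ^ (i * (n + 2) + 1)) =
      (x - 1) * ∑ i ∈ range (n + 2), x ^ ((2 * n + 3) * i) := by
  set S := ∑ i ∈ range (n + 1), x ^ ((2 * n + 3) * i)
  set T := ∑ i ∈ range (2 * n + 1), x ^ ((n + 2) * i)
  have hpos : ∑ i ∈ range (n + 1), (x ^ ((2 * n + 3) * i) + x ^ ((2 * n + 3) * i + (n + 2))) =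
      (1 + x ^ (n + 2)) * S := by
    simp only [pow_add, sum_add_distrib, ← sum_mul, S]
    ring
  have hneg : ∑ i ∈ range (2 * n + 1), x ^ (i * (n + 2) + 1) = x * T := by
    simp only [T, mul_sum, pow_succ, mul_comm _ (n + 2)]
    exact sum_congr rfl fun _ _ => mul_comm _ _
  rw [hpos, hneg, sum_range_succ]
  linear_combination x * pow_sub_one_mul_sum_range_pow_mul x (2 * n + 3) (n + 1) -
    x * pow_sub_one_mul_sum_range_pow_mul x (n + 2) (2 * n + 1)

theorem torus_knot_2pm1_alexander_poly_identity (p : ℕ) (hp : 2 ≤ p) :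
    ((X : ℤ[X]) ^ p - 1) *
        (∑ i ∈ range (p - 1), ((X : ℤ[X]) ^ ((2 * p - 1) * i) + X ^ ((2 * p - 1) * i + p)) -
          ∑ i ∈ range (2 * (p - 2) + 1), X ^ (i * p + 1)) =
      ((X : ℤ[X]) - 1) * ∑ i ∈ range p, X ^ ((2 * p - 1) * i) := by
  obtain ⟨n, rfl⟩ := Nat.exists_eq_add_of_le' hp
  rw [show n + 2 - 1 = n + 1 by omega, show 2 * (n + 2) - 1 = 2 * n + 3 by omega,
    show 2 * (n + 2 - 2) + 1 = 2 * n + 1 by omega]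
  exact pow_sub_one_mul_torus_alexander X n
end

section
/- For integers n ≥ 2 and p ≥ 2, the following identity holds in ℤ[t]: (∑_{i=0}^{(p²+p)(n-1)} t^{in})·(∑_{k=0}^{p-1} t^{kpn} - ∑_{k=0}^{p-2} t^{kn(p+1)+n}) = ∑_{k=0}^{p-2} ∑_{i=0}^{k} t^{in+knp} - ∑_{k=0}^{p-2} ∑_{i=0}^{k} t^{knp+(k+1)n+n(p²+p)(n-1)-in} + ∑_{i=0}^{(p²+p)(n-1)} t^{(p-1)np+in}. -/
open Polynomial Finset

/-!
Put `Y = X ^ n` and `S = 1 + Y + ⋯ + Y ^ M`. The second factor is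
`∑_{k < p-1} Y ^ (k p) (1 - Y ^ (k + 1)) + Y ^ ((p-1) p)`, and each summand telescopes
against `S`: `S (1 - Y ^ (k+1)) = (1 + ⋯ + Y ^ k) - Y ^ (M+1) (1 + ⋯ + Y ^ k)`, because
`S + Y ^ (M+1) (1 + ⋯ + Y ^ k)` and `(1 + ⋯ + Y ^ k) + Y ^ (k+1) S` both equal
`1 + ⋯ + Y ^ (M+k+1)`.
-/

theorem geom_sum_mul_one_sub_pow {R : Type*} [CommRing R] (Y : R) (m l : ℕ) :
    (∑ i ∈ range m, Y ^ i) * (1 - Y ^ l) =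
      ∑ i ∈ range l, Y ^ i - ∑ i ∈ range l, Y ^ (m + i) := by
  have hm := sum_range_add (Y ^ ·) m l
  have hl := sum_range_add (Y ^ ·) l m
  simp only [pow_add, ← mul_sum, add_comm l m] at hm hl ⊢
  linear_combination hl - hm

theorem geom_sum_mul_telescoping {R : Type*} [CommRing R] (Y : R) (p m : ℕ) (hp : 0 < p) :
    (∑ i ∈ range m, Y ^ i) *
        (∑ k ∈ range p, Y ^ (k * p) - ∑ k ∈ range (p - 1), Y ^ (k * (p + 1) + 1)) =
      ∑ k ∈ range (p - 1), ∑ i ∈ range (k + 1), Y ^ (k * p + i) -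
        ∑ k ∈ range (p - 1), ∑ i ∈ range (k + 1), Y ^ (k * p + (m + i)) +
        ∑ i ∈ range m, Y ^ ((p - 1) * p + i) := by
  obtain ⟨r, rfl⟩ : ∃ r, p = r + 1 := ⟨p - 1, by omega⟩
  have hrow (k : ℕ) :
      (∑ i ∈ range m, Y ^ i) * (Y ^ (k * (r + 1)) - Y ^ (k * (r + 1 + 1) + 1)) =
      ∑ i ∈ range (k + 1), Y ^ (k * (r + 1) + i) -
        ∑ i ∈ range (k + 1), Y ^ (k * (r + 1) + (m + i)) := by
    have h := congrArg (Y ^ (k * (r + 1)) * ·) (geom_sum_mul_one_sub_pow Y m (k + 1))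
    simp only [mul_sub, mul_sum, ← pow_add] at h
    rw [← h]; ring
  rw [Nat.add_sub_cancel, sum_range_succ, add_sub_right_comm, ← sum_sub_distrib, mul_add,
    mul_sum, ← sum_sub_distrib, sum_congr rfl fun k _ => hrow k, sum_mul]
  simp only [pow_add, mul_comm]

theorem big_cable_telescoping_identity_general (n p : ℕ) (hp : 2 ≤ p) :
    (∑ i ∈ range ((p ^ 2 + p) * (n - 1) + 1), (X : ℤ[X]) ^ (i * n)) *
        (∑ k ∈ range p, (X : ℤ[X]) ^ (k * p * n) -
          ∑ k ∈ range (p - 1), X ^ (k * n * (p + 1) + n)) =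
      ∑ k ∈ range (p - 1), ∑ i ∈ range (k + 1), (X : ℤ[X]) ^ (i * n + k * n * p) -
        ∑ k ∈ range (p - 1), ∑ i ∈ range (k + 1),
          (X : ℤ[X]) ^ (k * n * p + (k + 1) * n + n * (p ^ 2 + p) * (n - 1) - i * n) +
        ∑ i ∈ range ((p ^ 2 + p) * (n - 1) + 1), X ^ ((p - 1) * n * p + i * n) := by
  set M := (p ^ 2 + p) * (n - 1)
  have hreflect (k : ℕ) : ∑ i ∈ range (k + 1),
      (X : ℤ[X]) ^ (k * n * p + (k + 1) * n + n * (p ^ 2 + p) * (n - 1) - i * n) =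
        ∑ i ∈ range (k + 1), (X : ℤ[X]) ^ ((k * p + (M + 1 + i)) * n) := by
    -- reversing `i ↦ k - i` turns the truncated subtraction into an addition
    rw [← sum_range_reflect]
    refine sum_congr rfl fun i hi => ?_
    obtain ⟨j, rfl⟩ := Nat.exists_eq_add_of_le (Nat.lt_succ_iff.mp (mem_range.mp hi))
    congr 1
    rw [Nat.add_sub_cancel, Nat.add_sub_cancel_left, Nat.sub_eq_iff_eq_add]
    · ring
    · exact le_add_right (le_add_left (Nat.mul_le_mul_right n (by omega)))
  have hexp₁ (k : ℕ) : k * n * (p + 1) + n = (k * (p + 1) + 1) * n := by ring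
  have hexp₂ (i k : ℕ) : i * n + k * n * p = (k * p + i) * n := by ring
  have hexp₃ (i : ℕ) : (p - 1) * n * p + i * n = ((p - 1) * p + i) * n := by ring
  have key := geom_sum_mul_telescoping ((X : ℤ[X]) ^ n) p (M + 1) (by omega)
  simp only [← pow_mul'] at key
  simpa only [sum_congr rfl fun k _ => hreflect k, hexp₁, hexp₂, hexp₃] using key

theorem big_cable_telescoping_identity (n p : ℕ) (hn : 2 ≤ n) (hp : 2 ≤ p) :
    (∑ i ∈ range ((p ^ 2 + p) * (n - 1) + 1), (X : ℤ[X]) ^ (i * n)) *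
        (∑ k ∈ range p, (X : ℤ[X]) ^ (k * p * n) -
          ∑ k ∈ range (p - 1), X ^ (k * n * (p + 1) + n)) =
      ∑ k ∈ range (p - 1), ∑ i ∈ range (k + 1), (X : ℤ[X]) ^ (i * n + k * n * p) -
        ∑ k ∈ range (p - 1), ∑ i ∈ range (k + 1),
          (X : ℤ[X]) ^ (k * n * p + (k + 1) * n + n * (p ^ 2 + p) * (n - 1) - i * n) +
        ∑ i ∈ range ((p ^ 2 + p) * (n - 1) + 1), X ^ ((p - 1) * n * p + i * n) :=
  big_cable_telescoping_identity_general n p hp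
end

section
/- For integers p, q ≥ 2 coprime, the rational function (t-1)(t^{pq}-1)/((t^p-1)(t^q-1)) is a polynomial in ℤ[t] of degree (p-1)(q-1). -/
/-!
`X ^ n - 1 = ∏_{d ∣ n} Φ_d`. For coprime `p`, `q` the divisors of `p` and of `q` meet
only in `1`, so `(X ^ p - 1)(X ^ q - 1) = (X - 1) ∏_{d ∣ p ∨ d ∣ q} Φ_d`, and the quotient is the
product of the `Φ_d` with `d ∣ pq`, `d ∤ p`, `d ∤ q`. Its degree follows by comparing the degrees
of the monic polynomials on both sides: `1 + pq = deg + p + q`.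
-/

open Polynomial

namespace Polynomial

variable (R : Type*) [CommRing R]

noncomputable def torusKnotAlexander (p q : ℕ) : R[X] :=
  ∏ d ∈ (p * q).divisors \ (p.divisors ∪ q.divisors), cyclotomic d R

variable {R}

theorem torusKnotAlexander_monic (p q : ℕ) : (torusKnotAlexander R p q).Monic :=
  monic_prod_of_monic _ _ fun d _ ↦ cyclotomic.monic d R

theorem prod_cyclotomic_divisors_union_mul_X_sub_one {p q : ℕ} (hp : 0 < p) (hq : 0 < q)
    (hpq : p.Coprime q) :
    (∏ d ∈ p.divisors ∪ q.divisors, cyclotomic d R) * (X - 1) = (X ^ p - 1) * (X ^ q - 1) := by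
  have hinter : p.divisors ∩ q.divisors = {1} := by
    ext d
    simp only [Finset.mem_inter, Nat.mem_divisors, Finset.mem_singleton]
    constructor
    · rintro ⟨⟨hdp, -⟩, hdq, -⟩
      exact Nat.eq_one_of_dvd_coprimes hpq hdp hdq
    · rintro rfl
      exact ⟨⟨one_dvd p, hp.ne'⟩, one_dvd q, hq.ne'⟩
  rw [← cyclotomic_one, ← Finset.prod_singleton (fun d ↦ cyclotomic d R) 1, ← hinter,
    Finset.prod_union_inter, prod_cyclotomic_eq_X_pow_sub_one hp,
    prod_cyclotomic_eq_X_pow_sub_one hq]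

theorem X_sub_one_mul_X_pow_mul_sub_one {p q : ℕ} (hp : 0 < p) (hq : 0 < q) (hpq : p.Coprime q) :
    (X - 1 : R[X]) * (X ^ (p * q) - 1) = torusKnotAlexander R p q * ((X ^ p - 1) * (X ^ q - 1)) := by
  have hsub : p.divisors ∪ q.divisors ⊆ (p * q).divisors :=
    Finset.union_subset (Nat.divisors_subset_of_dvd (by positivity) (dvd_mul_right p q))
      (Nat.divisors_subset_of_dvd (by positivity) (dvd_mul_left q p))
  rw [← prod_cyclotomic_divisors_union_mul_X_sub_one hp hq hpq,
    ← prod_cyclotomic_eq_X_pow_sub_one (by positivity), ← Finset.prod_sdiff hsub,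
    torusKnotAlexander]
  ring

theorem natDegree_torusKnotAlexander [Nontrivial R] {p q : ℕ} (hp : 0 < p) (hq : 0 < q)
    (hpq : p.Coprime q) : (torusKnotAlexander R p q).natDegree = (p - 1) * (q - 1) := by
  have hmonic {n : ℕ} (hn : 0 < n) : (X ^ n - 1 : R[X]).Monic := leadingCoeff_X_pow_sub_one hn
  have hnatDegree {n : ℕ} : (X ^ n - 1 : R[X]).natDegree = n := by
    simpa using natDegree_X_pow_sub_C (R := R) (n := n) (r := 1)
  have hdeg := congrArg natDegree (X_sub_one_mul_X_pow_mul_sub_one (R := R) hp hq hpq)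
  nth_rw 1 [← pow_one (X : R[X])] at hdeg
  rw [(hmonic one_pos).natDegree_mul (hmonic (by positivity)),
    (torusKnotAlexander_monic p q).natDegree_mul ((hmonic hp).mul (hmonic hq)),
    (hmonic hp).natDegree_mul (hmonic hq), hnatDegree, hnatDegree, hnatDegree, hnatDegree] at hdeg
  obtain ⟨a, rfl⟩ := Nat.exists_eq_add_one_of_ne_zero hp.ne'
  obtain ⟨b, rfl⟩ := Nat.exists_eq_add_one_of_ne_zero hq.ne'
  simp only [Nat.add_sub_cancel]
  linarith

end Polynomial

theorem torus_knot_alexander_is_polynomial (p q : ℕ) (hp : 2 ≤ p) (hq : 2 ≤ q)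
    (hpq : Nat.Coprime p q) :
    ∃ f : ℤ[X], ((X : ℤ[X]) - 1) * (X ^ (p * q) - 1) = f * ((X ^ p - 1) * (X ^ q - 1)) ∧
      f.natDegree = (p - 1) * (q - 1) := by
  have hp0 : 0 < p := by omega
  have hq0 : 0 < q := by omega
  exact ⟨torusKnotAlexander ℤ p q, X_sub_one_mul_X_pow_mul_sub_one hp0 hq0 hpq,
    natDegree_torusKnotAlexander hp0 hq0 hpq⟩
end
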